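/- arXiv:0811.2766 — 3 statements merged into one kernel-verified Lean document; each statement's English description precedes it below -/
import Mathlib

section
/- Let F be an algebraically closed field, G a finite group, and V a finite-dimensional simple F[G]-module. Let P ≤ G be a subgroup such that: (i) dim_F End_{F[P]}(Res^G_P V) ≥ 2, and (ii) the induced module W := Ind_P^G(1_P) satisfies condition (★). Then for every subgroup H ≤ G, either G = HP (every element of G is a product h·p with h ∈ H, p ∈ P) or the restriction Res^G_H V is not a simple F[H]-module. -/
open Module Pointwise

variable {F : Type} [Field F]

section Defs

variable {G : Type} [Group G] {V : Type} [AddCommGroup V] [Module F V]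

def IsSubrep (ρ : Representation F G V) (p : Submodule F V) : Prop :=
  ∀ (g : G) (v : V), v ∈ p → ρ g v ∈ p

def IsIrredRep (ρ : Representation F G V) : Prop :=
  (⊥ : Submodule F V) ≠ ⊤ ∧ ∀ p : Submodule F V, IsSubrep ρ p → p = ⊥ ∨ p = ⊤

def repCommutant (ρ : Representation F G V) : Submodule F (V →ₗ[F] V) where
  carrier := {f | ∀ g : G, f ∘ₗ ρ g = ρ g ∘ₗ f}
  add_mem' := by
    intro a b ha hb g
    rw [LinearMap.add_comp, LinearMap.comp_add, ha g, hb g]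
  zero_mem' := by
    intro g
    rw [LinearMap.zero_comp, LinearMap.comp_zero]
  smul_mem' := by
    intro c f hf g
    rw [LinearMap.smul_comp, LinearMap.comp_smul, hf g]

def TrivialOn (ρ : Representation F G V) (p : Submodule F V) : Prop :=
  ∀ (g : G) (v : V), v ∈ p → ρ g v = v

def StarCond (ρ : Representation F G V) : Prop :=
  (∃ T A : Submodule F V, IsSubrep ρ T ∧ IsSubrep ρ A ∧ IsCompl T A ∧
      finrank F T = 1 ∧ TrivialOn ρ T ∧
      A ≠ ⊥ ∧ (∀ p : Submodule F V, p ≤ A → IsSubrep ρ p → p = ⊥ ∨ p = A) ∧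
      ¬ TrivialOn ρ A) ∨
  (∃ W₁ W₂ : Submodule F V, IsSubrep ρ W₁ ∧ IsSubrep ρ W₂ ∧
      ⊥ < W₁ ∧ W₁ < W₂ ∧ W₂ < ⊤ ∧
      (∀ p : Submodule F V, IsSubrep ρ p → p = ⊥ ∨ p = W₁ ∨ p = W₂ ∨ p = ⊤) ∧
      finrank F W₁ = 1 ∧ TrivialOn ρ W₁ ∧
      finrank F (V ⧸ W₂) = 1 ∧ (∀ (g : G) (v : V), ρ g v - v ∈ W₂) ∧
      ¬ (∀ (g : G) (v : V), v ∈ W₂ → ρ g v - v ∈ W₁))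

end Defs

/-! A non-scalar `θ` commuting with `ρ(P)` gives a `G`-equivariant map
`φ : F[G/P] → End V`, `gP ↦ ρ(g) θ ρ(g)⁻¹`, for the conjugation action on `End V`. The vectors
`w` with `φ w` commuting with `ρ(G)` are those fixed by `G` modulo `ker φ`; they form a proper
subspace since `φ(1·P) = θ` is not scalar (Schur), and (★) forces such a subspace to be at most
a line. If `Res_H V` were simple, Schur's lemma for `H` would put the indicator of every `H`-orbit
on `G/P` into that subspace; when `G ≠ HP` there are two such orbits, hence two independent
vectors. -/

section FixedModulo

variable {G : Type} [Group G] {V : Type} [AddCommGroup V] [Module F V]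
  {ρ : Representation F G V}

def fixedModulo (ρ : Representation F G V) (K : Submodule F V) : Submodule F V where
  carrier := {v | ∀ g : G, ρ g v - v ∈ K}
  add_mem' {v w} hv hw g := by
    simpa only [map_add, add_sub_add_comm] using K.add_mem (hv g) (hw g)
  zero_mem' g := by simp
  smul_mem' c v hv g := by
    simpa only [map_smul, ← smul_sub] using K.smul_mem c (hv g)

lemma mem_fixedModulo {K : Submodule F V} {v : V} :
    v ∈ fixedModulo ρ K ↔ ∀ g : G, ρ g v - v ∈ K :=
  Iff.rfl

lemma IsSubrep.inf {p q : Submodule F V} (hp : IsSubrep ρ p) (hq : IsSubrep ρ q) :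
    IsSubrep ρ (p ⊓ q) :=
  fun g v hv => ⟨hp g v hv.1, hq g v hv.2⟩

lemma isSubrep_fixedModulo (ρ : Representation F G V) (K : Submodule F V) :
    IsSubrep ρ (fixedModulo ρ K) := by
  intro h v hv g
  have key : ρ g (ρ h v) - ρ h v = (ρ (g * h) v - v) - (ρ h v - v) := by
    rw [map_mul, Module.End.mul_apply]; abel
  rw [key]
  exact K.sub_mem (hv _) (hv h)

lemma fixedModulo_eq_top_of_le {K L : Submodule F V} (hL : ∀ (g : G) (v : V), ρ g v - v ∈ L)
    (hLK : L ≤ K) : fixedModulo ρ K = ⊤ :=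
  eq_top_iff.2 fun v _ g => hLK (hL g v)

lemma finrank_fixedModulo_le_one_of_isCompl [FiniteDimensional F V] {T A K : Submodule F V}
    (hA : IsSubrep ρ A) (hTA : IsCompl T A) (hT : finrank F T = 1) (hTtriv : TrivialOn ρ T)
    (hAsimple : ∀ p ≤ A, IsSubrep ρ p → p = ⊥ ∨ p = A) (hAtriv : ¬ TrivialOn ρ A)
    (hK : IsSubrep ρ K) (hKtop : fixedModulo ρ K ≠ ⊤) :
    finrank F (fixedModulo ρ K) ≤ 1 := by
  have hsub_A : ∀ (g : G) (v : V), ρ g v - v ∈ A := by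
    intro g v
    obtain ⟨t, a, ht, ha, rfl⟩ := Submodule.codisjoint_iff_exists_add_eq.1 hTA.codisjoint v
    rw [map_add, hTtriv g t ht, add_sub_add_left_eq_sub]
    exact A.sub_mem (hA g a ha) ha
  have hKA : K ⊓ A = ⊥ := by
    refine (hAsimple _ inf_le_right (hK.inf hA)).resolve_right fun hKA => hKtop ?_
    exact fixedModulo_eq_top_of_le hsub_A (inf_eq_right.1 hKA)
  have hMA : Disjoint (fixedModulo ρ K) A := by
    refine disjoint_iff.2 <|
      (hAsimple _ inf_le_right ((isSubrep_fixedModulo ρ K).inf hA)).resolve_right ?_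
    refine fun hMA => hAtriv fun g a ha => ?_
    have hmem : ρ g a - a ∈ K ⊓ A := ⟨inf_eq_right.1 hMA ha g, hsub_A g a⟩
    rw [hKA, Submodule.mem_bot, sub_eq_zero] at hmem
    exact hmem
  have hdisj := Submodule.finrank_add_finrank_le_of_disjoint hMA
  have hcompl := Submodule.finrank_add_eq_of_isCompl hTA
  omega

lemma finrank_fixedModulo_le_one_of_uniserial {W₁ W₂ K : Submodule F V}
    (hclass : ∀ p : Submodule F V, IsSubrep ρ p → p = ⊥ ∨ p = W₁ ∨ p = W₂ ∨ p = ⊤)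
    (hW₁ : finrank F W₁ = 1) (hW₂ : ∀ (g : G) (v : V), ρ g v - v ∈ W₂)
    (hW₂W₁ : ¬ ∀ (g : G) (v : V), v ∈ W₂ → ρ g v - v ∈ W₁)
    (hK : IsSubrep ρ K) (hKtop : fixedModulo ρ K ≠ ⊤) :
    finrank F (fixedModulo ρ K) ≤ 1 := by
  have hKW₁ : K ≤ W₁ := by
    rcases hclass K hK with rfl | rfl | rfl | rfl
    · exact bot_le
    · exact le_rfl
    · exact absurd (fixedModulo_eq_top_of_le hW₂ le_rfl) hKtop
    · exact absurd (fixedModulo_eq_top_of_le (fun _ _ => Submodule.mem_top) le_rfl) hKtop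
  rcases hclass _ (isSubrep_fixedModulo ρ K) with hM | hM | hM | hM
  · rw [hM, finrank_bot]; exact zero_le_one
  · exact hM ▸ hW₁.le
  · exact absurd (fun g v hv => hKW₁ ((hM ▸ hv : v ∈ fixedModulo ρ K) g)) hW₂W₁
  · exact absurd hM hKtop

lemma StarCond.finrank_fixedModulo_le_one [FiniteDimensional F V] (hρ : StarCond ρ)
    {K : Submodule F V} (hK : IsSubrep ρ K) (hKtop : fixedModulo ρ K ≠ ⊤) :
    finrank F (fixedModulo ρ K) ≤ 1 := by
  rcases hρ with ⟨T, A, -, hA, hTA, hT, hTtriv, -, hAsimple, hAtriv⟩ |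
    ⟨W₁, W₂, -, -, -, -, -, hclass, hW₁, -, -, hW₂, hW₂W₁⟩
  · exact finrank_fixedModulo_le_one_of_isCompl hA hTA hT hTtriv hAsimple hAtriv hK hKtop
  · exact finrank_fixedModulo_le_one_of_uniserial hclass hW₁ hW₂ hW₂W₁ hK hKtop

end FixedModulo
section Commutant

variable {G : Type} [Group G] {V : Type} [AddCommGroup V] [Module F V]
  {ρ : Representation F G V}

lemma mem_repCommutant_iff_conj {f : V →ₗ[F] V} :
    f ∈ repCommutant ρ ↔ ∀ g : G, ρ g * f * ρ g⁻¹ = f := by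
  refine forall_congr' fun g => ?_
  rw [← ρ.asGroupHom_apply, ← ρ.asGroupHom_apply, map_inv, Units.mul_inv_eq_iff_eq_mul, eq_comm]
  rfl

lemma span_id_le_repCommutant : Submodule.span F {LinearMap.id} ≤ repCommutant ρ :=
  Submodule.span_le.2 <| Set.singleton_subset_iff.2 fun _ => rfl

lemma exists_mem_repCommutant_notMem_span_id (h : 2 ≤ finrank F (repCommutant ρ)) :
    ∃ θ ∈ repCommutant ρ, θ ∉ Submodule.span F {LinearMap.id} := by
  by_contra! hle
  have := (Submodule.finrank_mono hle).trans (finrank_span_le_card {(LinearMap.id : V →ₗ[F] V)})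
  simp only [Set.toFinset_singleton, Finset.card_singleton] at this
  omega

lemma IsIrredRep.nontrivial (h : IsIrredRep ρ) : Nontrivial V :=
  not_subsingleton_iff_nontrivial.1 fun _ => h.1 (Subsingleton.elim _ _)

lemma IsIrredRep.mem_span_id_of_mem_repCommutant [IsAlgClosed F] [FiniteDimensional F V]
    (h : IsIrredRep ρ) {f : V →ₗ[F] V} (hf : f ∈ repCommutant ρ) :
    f ∈ Submodule.span F {LinearMap.id} := by
  have := h.nontrivial
  obtain ⟨c, hc⟩ := Module.End.exists_eigenvalue f
  have hsub : IsSubrep ρ (Module.End.eigenspace f c) := by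
    intro g v hv
    rw [Module.End.mem_eigenspace_iff] at hv ⊢
    rw [← LinearMap.comp_apply, hf g, LinearMap.comp_apply, hv, map_smul]
  have htop : Module.End.eigenspace f c = ⊤ := (h.2 _ hsub).resolve_left hc
  refine Submodule.mem_span_singleton.2 ⟨c, LinearMap.ext fun v => ?_⟩
  have hv : v ∈ Module.End.eigenspace f c := htop ▸ Submodule.mem_top
  exact (Module.End.mem_eigenspace_iff.1 hv).symm

end Commutant

section Equivariant

variable {G : Type} [Group G] {V W : Type} [AddCommGroup V] [Module F V] [AddCommGroup W]
  [Module F W] {ρ : Representation F G V} {σ : Representation F G W} {φ : W →ₗ[F] V →ₗ[F] V}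

lemma isSubrep_ker_of_conj (hφ : ∀ g w, φ (σ g w) = ρ g * φ w * ρ g⁻¹) :
    IsSubrep σ (LinearMap.ker φ) := by
  intro g w hw
  rw [LinearMap.mem_ker] at hw ⊢
  rw [hφ, hw, mul_zero, zero_mul]

lemma mem_fixedModulo_ker_iff (hφ : ∀ g w, φ (σ g w) = ρ g * φ w * ρ g⁻¹) {w : W} :
    w ∈ fixedModulo σ (LinearMap.ker φ) ↔ φ w ∈ repCommutant ρ := by
  simp only [mem_fixedModulo, LinearMap.mem_ker, map_sub, hφ, sub_eq_zero,
    mem_repCommutant_iff_conj]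

lemma mem_fixedModulo_ker_of_isIrredRep_comp [IsAlgClosed F] [FiniteDimensional F V]
    (hφ : ∀ g w, φ (σ g w) = ρ g * φ w * ρ g⁻¹) {H : Subgroup G}
    (hH : IsIrredRep (ρ.comp H.subtype)) {w : W} (hw : ∀ h ∈ H, σ h w = w) :
    w ∈ fixedModulo σ (LinearMap.ker φ) := by
  have hφH : ∀ (h : H) w, φ (σ.comp H.subtype h w) = ρ.comp H.subtype h * φ w *
      ρ.comp H.subtype h⁻¹ := fun h => hφ h
  have hwH : w ∈ fixedModulo (σ.comp H.subtype) (LinearMap.ker φ) := fun h => by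
    simp [hw h h.2]
  rw [mem_fixedModulo_ker_iff hφ]
  exact span_id_le_repCommutant <|
    hH.mem_span_id_of_mem_repCommutant ((mem_fixedModulo_ker_iff hφH).1 hwH)

end Equivariant

section CosetConj

open MonoidAlgebra

variable {G : Type} [Group G] {V : Type} [AddCommGroup V] [Module F V]

lemma conj_map_mul (ρ : Representation F G V) (a b : G) (f : V →ₗ[F] V) :
    ρ (a * b) * f * ρ (a * b)⁻¹ = ρ a * (ρ b * f * ρ b⁻¹) * ρ a⁻¹ := by
  simp only [mul_inv_rev, map_mul, mul_assoc]

variable (ρ : Representation F G V) (P : Subgroup G) (θ : V →ₗ[F] V)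
  (hθ : θ ∈ repCommutant (ρ.comp P.subtype))

noncomputable def cosetConj (x : G ⧸ P) : V →ₗ[F] V :=
  Quotient.liftOn' x (fun g => ρ g * θ * ρ g⁻¹) fun a b hab => by
    obtain ⟨p, rfl⟩ : ∃ p : P, b = a * p := ⟨⟨_, QuotientGroup.leftRel_apply.1 hab⟩, by group⟩
    rw [conj_map_mul]
    exact congrArg (ρ a * · * ρ a⁻¹) (mem_repCommutant_iff_conj.1 hθ p).symm

noncomputable def cosetConjMap : F[G ⧸ P] →ₗ[F] V →ₗ[F] V :=
  Finsupp.linearCombination F (cosetConj ρ P θ hθ) ∘ₗ (coeffLinearEquiv F).toLinearMap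

variable {ρ P θ}

lemma cosetConj_mk (g : G) : cosetConj ρ P θ hθ g = ρ g * θ * ρ g⁻¹ :=
  rfl

lemma cosetConj_smul (g : G) (x : G ⧸ P) :
    cosetConj ρ P θ hθ (g • x) = ρ g * cosetConj ρ P θ hθ x * ρ g⁻¹ := by
  induction x using QuotientGroup.induction_on with
  | H a => rw [MulAction.Quotient.smul_mk, cosetConj_mk, cosetConj_mk, smul_eq_mul, conj_map_mul]

lemma cosetConjMap_single (x : G ⧸ P) (c : F) :
    cosetConjMap ρ P θ hθ (single x c) = c • cosetConj ρ P θ hθ x :=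
  Finsupp.linearCombination_single F c x

lemma cosetConjMap_single_one : cosetConjMap ρ P θ hθ (single ((1 : G) : G ⧸ P) 1) = θ := by
  rw [cosetConjMap_single, one_smul, cosetConj_mk, inv_one, map_one, one_mul, mul_one]

lemma cosetConjMap_ofMulAction (g : G) (w : F[G ⧸ P]) :
    cosetConjMap ρ P θ hθ (Representation.ofMulAction F G (G ⧸ P) g w) =
      ρ g * cosetConjMap ρ P θ hθ w * ρ g⁻¹ := by
  induction w using MonoidAlgebra.induction_linear with
  | zero => simp
  | add w₁ w₂ h₁ h₂ => simp only [map_add, h₁, h₂, mul_add, add_mul]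
  | single x c =>
    rw [Representation.ofMulAction_single, cosetConjMap_single, cosetConjMap_single,
      cosetConj_smul, mul_smul_comm, smul_mul_assoc]

end CosetConj

lemma two_le_finrank_of_linearIndependent_pair {W : Type} [AddCommGroup W] [Module F W]
    [FiniteDimensional F W] {M : Submodule F W} {u v : W} (huv : LinearIndependent F ![u, v])
    (hu : u ∈ M) (hv : v ∈ M) : 2 ≤ finrank F M := by
  have hspan : Submodule.span F (Set.range ![u, v]) ≤ M := by
    simp [Submodule.span_le, Matrix.range_cons, Set.insert_subset_iff, hu, hv]
  calc 2 = finrank F (Submodule.span F (Set.range ![u, v])) := by simp [finrank_span_eq_card huv]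
    _ ≤ finrank F M := Submodule.finrank_mono hspan

section OrbitIndicator

open MonoidAlgebra MulAction

variable {G X : Type} [Group G] [MulAction G X] [Finite X]

noncomputable def orbitIndicator (F : Type) [Field F] (H : Subgroup G) (x : X) : F[X] :=
  ofCoeff (Finsupp.equivFunOnFinite.symm ((orbit H x).indicator 1))

lemma coeff_orbitIndicator (H : Subgroup G) (x y : X) :
    (orbitIndicator F H x).coeff y = (orbit H x).indicator 1 y :=
  rfl

lemma ofMulAction_orbitIndicator {H : Subgroup G} {h : G} (hh : h ∈ H) (x : X) :
    Representation.ofMulAction F G X h (orbitIndicator F H x) = orbitIndicator F H x := by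
  classical
  ext y
  have horbit : orbit H (h⁻¹ • y) = orbit H y := orbit_smul (⟨h, hh⟩⁻¹ : H) y
  have hmem : h⁻¹ • y ∈ orbit H x ↔ y ∈ orbit H x := by
    rw [← orbit_eq_iff, ← orbit_eq_iff, horbit]
  simp only [Representation.coeff_ofMulAction, coeff_orbitIndicator, Set.indicator_apply, hmem,
    Pi.one_apply]

lemma linearIndependent_orbitIndicator_pair {H : Subgroup G} {x y : X} (hy : y ∉ orbit H x) :
    LinearIndependent F ![orbitIndicator F H x, orbitIndicator F H y] := by
  refine LinearIndependent.pair_iff.2 fun s t hst => ?_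
  have hx : x ∉ orbit H y := fun h => hy (mem_orbit_symm.1 h)
  have h₁ := congrArg (fun w : F[X] => w.coeff x) hst
  have h₂ := congrArg (fun w : F[X] => w.coeff y) hst
  simp [coeff_orbitIndicator, hx, hy, mem_orbit_self] at h₁ h₂
  exact ⟨h₁, h₂⟩

end OrbitIndicator

lemma mk_mem_orbit_mk_one_iff {G : Type} [Group G] {H P : Subgroup G} {g : G} :
    (g : G ⧸ P) ∈ MulAction.orbit H ((1 : G) : G ⧸ P) ↔ ∃ h ∈ H, ∃ p ∈ P, g = h * p := by
  rw [MulAction.mem_orbit_iff]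
  constructor
  · rintro ⟨⟨h, hh⟩, hg⟩
    change h • ((1 : G) : G ⧸ P) = g at hg
    rw [MulAction.Quotient.smul_mk, smul_eq_mul, mul_one, QuotientGroup.eq] at hg
    exact ⟨h, hh, _, hg, by group⟩
  · rintro ⟨h, hh, p, hp, rfl⟩
    refine ⟨⟨h, hh⟩, ?_⟩
    change h • ((1 : G) : G ⧸ P) = _
    rw [MulAction.Quotient.smul_mk, smul_eq_mul, mul_one, QuotientGroup.eq]
    simpa using hp

theorem statement_0
    [IsAlgClosed F]
    {G : Type} [Group G] [Finite G]
    {V : Type} [AddCommGroup V] [Module F V] [FiniteDimensional F V]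
    (ρ : Representation F G V) (hV : IsIrredRep ρ)
    (P : Subgroup G)
    (hEnd : 2 ≤ finrank F (repCommutant (ρ.comp P.subtype)))
    (hStar : StarCond (Representation.ofMulAction F G (G ⧸ P)))
    (H : Subgroup G) :
    (∀ g : G, ∃ h ∈ H, ∃ p ∈ P, g = h * p) ∨ ¬ IsIrredRep (ρ.comp H.subtype) := by
  refine or_iff_not_imp_left.2 fun hHP hH => ?_
  obtain ⟨g₀, hg₀⟩ := not_forall.1 hHP
  obtain ⟨θ, hθP, hθ⟩ := exists_mem_repCommutant_notMem_span_id hEnd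
  have hφ := cosetConjMap_ofMulAction hθP
  set M := fixedModulo (Representation.ofMulAction F G (G ⧸ P))
    (LinearMap.ker (cosetConjMap ρ P θ hθP))
  have hM : finrank F M ≤ 1 := by
    refine hStar.finrank_fixedModulo_le_one (isSubrep_ker_of_conj hφ) fun htop => hθ ?_
    refine hV.mem_span_id_of_mem_repCommutant ?_
    rw [← cosetConjMap_single_one hθP, ← mem_fixedModulo_ker_iff hφ, htop]
    exact Submodule.mem_top
  have hu : ∀ x, orbitIndicator F H x ∈ M := fun x =>
    mem_fixedModulo_ker_of_isIrredRep_comp hφ hH fun _ hh => ofMulAction_orbitIndicator hh x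
  have hg₀ : (g₀ : G ⧸ P) ∉ MulAction.orbit H ((1 : G) : G ⧸ P) :=
    mt mk_mem_orbit_mk_one_iff.1 hg₀
  have htwo := two_le_finrank_of_linearIndependent_pair
    (linearIndependent_orbitIndicator_pair (F := F) hg₀) (hu _) (hu _)
  omega
end

section
/- Let F be an algebraically closed field, G a finite group, and S ≤ H subgroups that are both normal in G. Let V be a finite-dimensional simple F[G]-module and U a simple F[H]-submodule of Res^G_H V. Then κ^G_S(V) = κ^G_H(V) · κ^H_S(U), i.e. the composition length of V as an F[S]-module equals the product of the composition length of V as an F[H]-module and the composition length of U as an F[S]-module. -/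
open Module

section Defs

variable {F : Type} [Field F] {G : Type} [Group G] {V : Type} [AddCommGroup V] [Module F V]

/-- `CompLengthIs ρ T k`: the `G`-invariant subspace `T` of `V` has composition length `k`
as a module over the group algebra `F[G]`: there is a chain `⊥ = c₀ < c₁ < ⋯ < c_k = T` of
invariant subspaces with no invariant subspace strictly between consecutive terms. -/
def CompLengthIs (ρ : Representation F G V) (T : Submodule F V) (k : ℕ) : Prop :=
  ∃ c : Fin (k + 1) → Submodule F V,
    c 0 = ⊥ ∧ c (Fin.last k) = T ∧ (∀ i, IsSubrep ρ (c i)) ∧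
    (∀ i : Fin k, c i.castSucc < c i.succ) ∧
    (∀ i : Fin k, ∀ q : Submodule F V, IsSubrep ρ q →
      c i.castSucc ≤ q → q ≤ c i.succ → q = c i.castSucc ∨ q = c i.succ)

/-- `σ` (a representation on `U`) is a composition factor of `ρ` (a representation on `V`):
there are invariant subspaces `p ≤ q` of `V` and an equivariant `F`-linear surjection
`q → U` whose kernel is exactly `p`, i.e. `q/p ≅ U` as `G`-modules. -/
def IsCompFactor {U : Type} [AddCommGroup U] [Module F U]
    (σ : Representation F G U) (ρ : Representation F G V) : Prop :=
  ∃ (p q : Submodule F V) (_ : IsSubrep ρ p) (hq : IsSubrep ρ q) (_ : p ≤ q)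
    (f : ↥q →ₗ[F] U), Function.Surjective f ∧
      (∀ x : ↥q, f x = 0 ↔ (x : V) ∈ p) ∧
      (∀ (g : G) (x : ↥q), f ⟨ρ g x, hq g x x.2⟩ = σ g (f x))

end Defs

/-!
Clifford's argument. Let `K` be a normal subgroup of `G` and `W` a simple `F[K]`-submodule of
`V`. The conjugates `ρ g W` are again simple `F[K]`-submodules, of the same dimension as `W`, and
their sum is `G`-invariant, hence all of `V`. So `Res^G_K V` is semisimple and each of its
composition factors is isomorphic to some `ρ g W`: every composition series over `F[K]` of `V`, or
of an `F[K]`-submodule of `V`, raises the dimension by `dim W` at each step. With `K = H`, `W = U`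
and with `K = S`, `W` a simple `F[S]`-submodule of `U`, this gives
`a · dim W = dim V = b · dim U = b · c · dim W`.
-/

section CoveringDimension

variable {F R M : Type*} [Field F] [Ring R] [Algebra F R] [AddCommGroup M] [Module F M]
  [Module R M] [IsScalarTower F R M] [FiniteDimensional F M]

theorem Submodule.finrank_eq_add_of_covBy {s : Set (Submodule R M)}
    (hsimple : ∀ m ∈ s, IsSimpleModule R m) (hs : sSup s = ⊤) {n : ℕ}
    (hdim : ∀ m ∈ s, finrank F m = n) {X Y : Submodule R M} (hXY : X ⋖ Y) :
    finrank F Y = finrank F X + n := by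
  have : ∀ m : s, IsSimpleModule R m := fun m => hsimple m m.2
  have : IsSemisimpleModule R M :=
    isSemisimpleModule_of_isSemisimpleModule_submodule' (fun _ => inferInstance)
      (sSup_eq_iSup' s ▸ hs)
  obtain ⟨C, hXC, hXCY⟩ := IsModularLattice.exists_inf_eq_and_sup_eq bot_le hXY.le
  have : IsSimpleModule R C := by
    rw [isSimpleModule_iff_isAtom, ← bot_covBy_iff, ← hXC]
    exact inf_covBy_of_covBy_sup_left (hXCY ▸ hXY)
  obtain ⟨S, hS, ⟨e⟩⟩ := C.linearEquiv_of_sSup_eq_top s hs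
  have hdimC : finrank F C = n := (e.restrictScalars F).finrank_eq.trans (hdim S hS)
  have := finrank_sup_add_finrank_inf_eq (X.restrictScalars F) (C.restrictScalars F)
  rw [← restrictScalars_sup, ← restrictScalars_inf, hXCY, hXC, restrictScalars_bot, finrank_bot,
    add_zero] at this
  rw [← hdimC]
  exact this

end CoveringDimension

section Clifford

variable {F G V : Type} [Field F] [Group G] [AddCommGroup V] [Module F V]
  (ρ : Representation F G V)

theorem Representation.map_map_apply (p : Submodule F V) (g h : G) :
    (p.map (ρ h)).map (ρ g) = p.map (ρ (g * h)) := by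
  rw [map_mul, Module.End.mul_eq_comp, Submodule.map_comp]

variable {ρ} in
theorem IsIrredRep.iSup_map_eq_top (hρ : IsIrredRep ρ) {W : Submodule F V} (hW : W ≠ ⊥) :
    ⨆ g, W.map (ρ g) = ⊤ := by
  have hJ : IsSubrep ρ (⨆ h, W.map (ρ h)) := fun g v hv => by
    have : (⨆ h, W.map (ρ h)).map (ρ g) ≤ ⨆ h, W.map (ρ h) := by
      rw [Submodule.map_iSup]
      exact iSup_le fun h => ρ.map_map_apply W g h ▸ le_iSup (fun h => W.map (ρ h)) (g * h)
    exact this (Submodule.mem_map_of_mem hv)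
  refine (hρ.2 _ hJ).resolve_left fun hbot => hW (eq_bot_iff.mpr ?_)
  rw [← hbot]
  convert le_iSup (fun h => W.map (ρ h)) 1
  rw [map_one, Module.End.one_eq_id, Submodule.map_id]

variable (K : Subgroup G) [K.Normal]

theorem IsSubrep.map_of_normal {W : Submodule F V} (hW : IsSubrep (ρ.comp K.subtype) W)
    (g : G) : IsSubrep (ρ.comp K.subtype) (W.map (ρ g)) := by
  rintro k _ ⟨w, hw, rfl⟩
  have hk : g⁻¹ * k * g ∈ K := Subgroup.Normal.conj_mem' inferInstance _ k.2 g
  refine ⟨ρ (g⁻¹ * k * g) w, hW ⟨_, hk⟩ w hw, ?_⟩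
  show ρ g (ρ (g⁻¹ * k * g) w) = ρ k (ρ g w)
  simp [map_mul]

def Subrepresentation.conjOrderIso (g : G) :
    Subrepresentation (ρ.comp K.subtype) ≃o Subrepresentation (ρ.comp K.subtype) :=
  Equiv.toOrderIso
    { toFun := fun W => ⟨W.toSubmodule.map (ρ g),
        IsSubrep.map_of_normal ρ K W.apply_mem_toSubmodule g⟩
      invFun := fun W => ⟨W.toSubmodule.map (ρ g⁻¹),
        IsSubrep.map_of_normal ρ K W.apply_mem_toSubmodule g⁻¹⟩
      left_inv := fun W => by
        ext1
        simp only [ρ.map_map_apply, inv_mul_cancel, map_one, Module.End.one_eq_id,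
          Submodule.map_id]
      right_inv := fun W => by
        ext1
        simp only [ρ.map_map_apply, mul_inv_cancel, map_one, Module.End.one_eq_id,
          Submodule.map_id] }
    (fun _ _ h => Submodule.map_mono h) (fun _ _ h => Submodule.map_mono h)

variable {ρ} in
theorem IsIrredRep.finrank_eq_add_of_covBy [FiniteDimensional F V] (hρ : IsIrredRep ρ)
    {W : Subrepresentation (ρ.comp K.subtype)} (hW : IsAtom W)
    {X Y : Subrepresentation (ρ.comp K.subtype)} (hXY : X ⋖ Y) :
    finrank F Y.toSubmodule = finrank F X.toSubmodule + finrank F W.toSubmodule := by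
  let e := Subrepresentation.subrepresentationSubmoduleOrderIso (ρ := ρ.comp K.subtype)
  let conj := Subrepresentation.conjOrderIso ρ K
  refine (e X).finrank_eq_add_of_covBy (s := Set.range fun g => e (conj g W))
    ?_ ?_ ?_ ((apply_covBy_apply_iff e).mpr hXY)
  · rintro _ ⟨g, rfl⟩
    rw [isSimpleModule_iff_isAtom, e.isAtom_iff, (conj g).isAtom_iff]
    exact hW
  · have hW0 : W.toSubmodule ≠ ⊥ := fun h => hW.1 (Subrepresentation.toSubmodule_injective h)
    refine Submodule.restrictScalars_injective F _ _ ?_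
    rw [sSup_range, Submodule.restrictScalars_iSup, Submodule.restrictScalars_top]
    exact hρ.iSup_map_eq_top hW0
  · rintro _ ⟨g, rfl⟩
    exact (LinearEquiv.ofBijective (ρ g) (ρ.apply_bijective g)).finrank_map_eq W.toSubmodule

end Clifford

section CompositionLength

variable {F K V : Type} [Field F] [Group K] [AddCommGroup V] [Module F V]
  {σ : Representation F K V}

theorem Subrepresentation.mk_covBy_mk_iff {X Y : Submodule F V} (hX : IsSubrep σ X)
    (hY : IsSubrep σ Y) :
    (⟨X, hX⟩ : Subrepresentation σ) ⋖ ⟨Y, hY⟩ ↔ X < Y ∧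
      ∀ q : Submodule F V, IsSubrep σ q → X ≤ q → q ≤ Y → q = X ∨ q = Y := by
  rw [covBy_iff_lt_and_eq_or_eq]
  refine and_congr Iff.rfl ⟨fun h q hq hXq hqY => ?_, fun h q hXq hqY => ?_⟩
  · exact (h ⟨q, hq⟩ hXq hqY).imp (congrArg toSubmodule) (congrArg toSubmodule)
  · exact (h q.toSubmodule q.apply_mem_toSubmodule hXq hqY).imp Subrepresentation.ext
      Subrepresentation.ext

theorem Subrepresentation.isAtom_mk {U : Submodule F V} (hU : IsSubrep σ U) (hU0 : U ≠ ⊥)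
    (hsimple : ∀ p : Submodule F V, p ≤ U → IsSubrep σ p → p = ⊥ ∨ p = U) :
    IsAtom (⟨U, hU⟩ : Subrepresentation σ) :=
  ⟨fun h => hU0 (congrArg toSubmodule h), fun q hq => Subrepresentation.ext <|
    (hsimple q.toSubmodule hq.le q.apply_mem_toSubmodule).resolve_right
      fun h => hq.ne (Subrepresentation.ext h)⟩

theorem CompLengthIs.exists_isAtom {T : Submodule F V} {k : ℕ} (hT : CompLengthIs σ T k)
    (hT0 : T ≠ ⊥) : ∃ W : Subrepresentation σ, IsAtom W := by
  obtain ⟨c, h0, hlast, hinv, hlt, hcov⟩ := hT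
  cases k with
  | zero => exact absurd (hlast.symm.trans h0) hT0
  | succ k =>
    refine ⟨⟨c 1, hinv 1⟩, bot_covBy_iff.mp ?_⟩
    convert (Subrepresentation.mk_covBy_mk_iff (hinv 0) (hinv 1)).mpr ⟨hlt 0, hcov 0⟩
    exact Subrepresentation.ext h0.symm

theorem CompLengthIs.finrank_eq_mul {T : Submodule F V} {k n : ℕ} (hT : CompLengthIs σ T k)
    (hstep : ∀ X Y : Subrepresentation σ, X ⋖ Y →
      finrank F Y.toSubmodule = finrank F X.toSubmodule + n) :
    finrank F T = k * n := by
  obtain ⟨c, h0, hlast, hinv, hlt, hcov⟩ := hT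
  have hc : ∀ i : Fin (k + 1), finrank F (c i) = i * n := by
    intro i
    induction i using Fin.induction with
    | zero => simpa using congrArg (fun p : Submodule F V => finrank F p) h0
    | succ i ih =>
      have hcovBy := (Subrepresentation.mk_covBy_mk_iff (hinv _) (hinv _)).mpr ⟨hlt i, hcov i⟩
      rw [hstep _ _ hcovBy]
      simp only [ih, Fin.val_castSucc, Fin.val_succ, Nat.succ_mul]
  rw [← hlast]
  simpa using hc (Fin.last k)

end CompositionLength

theorem statement_14_general
    {F : Type} [Field F]
    {G : Type} [Group G]
    (S H : Subgroup G) [S.Normal] [H.Normal]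
    {V : Type} [AddCommGroup V] [Module F V] [FiniteDimensional F V]
    (ρ : Representation F G V) (hV : IsIrredRep ρ)
    -- `U` is a simple `F[H]`-submodule of `Res^G_H V`
    (U : Submodule F V) (hUsub : IsSubrep (ρ.comp H.subtype) U) (hUne : U ≠ ⊥)
    (hUsimple : ∀ p : Submodule F V, p ≤ U → IsSubrep (ρ.comp H.subtype) p →
      p = ⊥ ∨ p = U) :
    ∀ a b c : ℕ,
      CompLengthIs (ρ.comp S.subtype) ⊤ a →
      CompLengthIs (ρ.comp H.subtype) ⊤ b →
      CompLengthIs (ρ.comp S.subtype) U c →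
      a = b * c := by
  intro a b c ha hb hc
  obtain ⟨W, hW⟩ := hc.exists_isAtom hUne
  have hU := Subrepresentation.isAtom_mk hUsub hUne hUsimple
  have h1 : finrank F (⊤ : Submodule F V) = a * finrank F W.toSubmodule :=
    ha.finrank_eq_mul fun _ _ => hV.finrank_eq_add_of_covBy S hW
  have h2 : finrank F (⊤ : Submodule F V) = b * finrank F U :=
    hb.finrank_eq_mul fun _ _ => hV.finrank_eq_add_of_covBy H hU
  have h3 : finrank F U = c * finrank F W.toSubmodule :=
    hc.finrank_eq_mul fun _ _ => hV.finrank_eq_add_of_covBy S hW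
  have hW0 : 0 < finrank F W.toSubmodule := Nat.pos_of_ne_zero fun h =>
    hW.1 (Subrepresentation.toSubmodule_injective (Submodule.finrank_eq_zero.mp h))
  exact Nat.eq_of_mul_eq_mul_right hW0 (by rw [← h1, h2, h3, mul_assoc])

theorem statement_14
    {F : Type} [Field F] [IsAlgClosed F]
    {G : Type} [Group G] [Finite G]
    (S H : Subgroup G) (hSH : S ≤ H) [S.Normal] [H.Normal]
    {V : Type} [AddCommGroup V] [Module F V] [FiniteDimensional F V]
    (ρ : Representation F G V) (hV : IsIrredRep ρ)
    -- `U` is a simple `F[H]`-submodule of `Res^G_H V`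
    (U : Submodule F V) (hUsub : IsSubrep (ρ.comp H.subtype) U) (hUne : U ≠ ⊥)
    (hUsimple : ∀ p : Submodule F V, p ≤ U → IsSubrep (ρ.comp H.subtype) p →
      p = ⊥ ∨ p = U) :
    ∀ a b c : ℕ,
      CompLengthIs (ρ.comp S.subtype) ⊤ a →
      CompLengthIs (ρ.comp H.subtype) ⊤ b →
      CompLengthIs (ρ.comp S.subtype) U c →
      a = b * c :=
  statement_14_general S H ρ hV U hUsub hUne hUsimple
end

section
/- Let F be an algebraically closed field of characteristic ℓ ≥ 0, G a finite group, and S ⊴ G a normal subgroup with G/S cyclic. Let A be the unique subgroup with S ≤ A ≤ G such that [A : S] equals the ℓ-part of [G : S] (so A = S if ℓ = 0). Suppose U is a simple F[S]-module which occurs as a composition factor of both Res^G_S V₁ and Res^G_S V₂, where V₁ and V₂ are finite-dimensional simple F[G]-modules. Then V₂ ≅ V₁ ⊗ F_λ for some group homomorphism λ : G → F^× with A ≤ ker λ. -/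
open Module

/-!
By Clifford's theorem the restrictions of `V₁` and `V₂` to the normal subgroup `S` are
semisimple, so the common composition factor `U` is a quotient of `Res V₁` and a submodule of
`Res V₂`; hence `Hom_S(V₁, V₂) ≠ 0`. The group `G` acts on `Hom_S(V₁, V₂)` by conjugation with
`S` acting trivially, so an eigenvector `ψ` of a generator of the cyclic group `G/S` is an
eigenvector of all of `G`, with a character `λ` trivial on `S`. Then `ψ : V₁ ⊗ F_λ → V₂` is a
nonzero `G`-map between simple modules, hence an isomorphism by Schur's lemma. Finally, for
`a ∈ A` we have `λ(a)^[A:S] = 1` with `[A:S]` a power of `ℓ`, which forces `λ(a) = 1`.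
-/

open Representation

section SubrepLattice

variable {F G V : Type} [Field F] [Group G] [AddCommGroup V] [Module F V]

def subrepLattice (ρ : Representation F G V) : CompleteSublattice (Submodule F V) :=
  CompleteSublattice.mk' {p | IsSubrep ρ p}
    (fun _ hs g => sSup_le fun _ hp =>
      (show _ ≤ Submodule.comap (ρ g) _ from hs hp g).trans (Submodule.comap_mono (le_sSup hp)))
    (fun _ hs g v hv =>
      Submodule.mem_sInf.mpr fun _ hp => hs hp g v (Submodule.mem_sInf.mp hv _ hp))

variable (ρ : Representation F G V)

instance : IsModularLattice (subrepLattice ρ) :=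
  ⟨fun {x y z} h => show ((x ⊔ y) ⊓ z : Submodule F V) ≤ x ⊔ y ⊓ z from
    IsModularLattice.sup_inf_le_assoc_of_le (y : Submodule F V) h⟩

instance [FiniteDimensional F V] : IsCompactlyGenerated (subrepLattice ρ) :=
  CompleteLattice.isCompactlyGenerated_of_wellFoundedGT

instance [FiniteDimensional F V] : IsAtomic (subrepLattice ρ) :=
  isAtomic_of_orderBot_wellFounded_lt wellFounded_lt

end SubrepLattice

section NormalSubgroup

variable {F G V : Type} [Field F] [Group G] [AddCommGroup V] [Module F V]
  (ρ : Representation F G V) (S : Subgroup G) [S.Normal]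

lemma Representation.apply_apply_conj (g s : G) (v : V) :
    ρ s (ρ g v) = ρ g (ρ (g⁻¹ * s * g) v) := by
  simp only [← Module.End.mul_apply, ← map_mul]
  group

lemma Representation.map_inv_map (g : G) (p : Submodule F V) :
    (p.map (ρ g)).map (ρ g⁻¹) = p := by
  rw [← Submodule.map_comp, ← Module.End.mul_eq_comp, ← map_mul, inv_mul_cancel, map_one,
    Module.End.one_eq_id, Submodule.map_id]

lemma isSubrep_comp_subtype_map {p : Submodule F V} (hp : IsSubrep (ρ.comp S.subtype) p)
    (g : G) : IsSubrep (ρ.comp S.subtype) (p.map (ρ g)) := by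
  rintro s _ ⟨v, hv, rfl⟩
  have hs : g⁻¹ * s * g ∈ S := by simpa using Subgroup.Normal.conj_mem ‹_› _ s.2 g⁻¹
  exact ⟨_, hp ⟨_, hs⟩ v hv, (ρ.apply_apply_conj g s v).symm⟩

lemma mem_invariants_comp_subtype_apply {v : V} (hv : v ∈ invariants (ρ.comp S.subtype))
    (g : G) : ρ g v ∈ invariants (ρ.comp S.subtype) := by
  intro s
  have hs : g⁻¹ * s * g ∈ S := by simpa using Subgroup.Normal.conj_mem ‹_› _ s.2 g⁻¹
  simpa using (ρ.apply_apply_conj g s v).trans (congrArg (ρ g) (hv ⟨_, hs⟩))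

def subrepLatticeConj (g : G) :
    subrepLattice (ρ.comp S.subtype) ≃o subrepLattice (ρ.comp S.subtype) where
  toFun p := ⟨(p : Submodule F V).map (ρ g), isSubrep_comp_subtype_map ρ S p.2 g⟩
  invFun p := ⟨(p : Submodule F V).map (ρ g⁻¹), isSubrep_comp_subtype_map ρ S p.2 g⁻¹⟩
  left_inv p := Subtype.ext (ρ.map_inv_map g p)
  right_inv p := Subtype.ext (by simpa using ρ.map_inv_map g⁻¹ p)
  map_rel_iff' := Submodule.map_le_map_iff_of_injective (ρ.apply_bijective g).1 _ _

theorem complementedLattice_subrepLattice_comp_subtype [FiniteDimensional F V]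
    (h : IsIrredRep ρ) : ComplementedLattice (subrepLattice (ρ.comp S.subtype)) := by
  apply complementedLattice_of_sSup_atoms_eq_top
  set T := sSup {a : subrepLattice (ρ.comp S.subtype) | IsAtom a}
  -- `G` permutes the simple `S`-submodules, so their sum is `G`-stable.
  have hT : IsSubrep ρ (T : Submodule F V) := fun g => by
    have : subrepLatticeConj ρ S g T ≤ T := by
      rw [OrderIso.map_sSup]
      exact iSup₂_le fun a ha => le_sSup ((OrderIso.isAtom_iff _ a).mpr ha)
    exact Submodule.map_le_iff_le_comap.mp this
  obtain ⟨a, ha, -⟩ :=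
    (eq_bot_or_exists_atom_le (⊤ : subrepLattice (ρ.comp S.subtype))).resolve_left
      fun h0 => h.1 (congrArg Subtype.val h0).symm
  rcases h.2 _ hT with hbot | htop
  · exact (ha.1 (le_bot_iff.mp ((le_sSup (s := {a | IsAtom a}) ha).trans (Subtype.ext hbot).le))).elim
  · exact Subtype.ext htop

end NormalSubgroup

section CompositionFactor

variable {F X V U : Type} [Field F] [Group X] [AddCommGroup V] [Module F V]
  [AddCommGroup U] [Module F U] {τ : Representation F X V} {σ : Representation F X U}

lemma projection_apply_apply_of_isSubrep {p q : Submodule F V} (hp : IsSubrep τ p)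
    (hq : IsSubrep τ q) (hpq : IsCompl p q) (g : X) (v : V) :
    p.projection q hpq (τ g v) = τ g (p.projection q hpq v) := by
  have hcomm : Commute (p.projection q hpq) (τ g) :=
    LinearMap.IsIdempotentElem.commute_iff (Submodule.isIdempotentElem_projection hpq) |>.mpr
      ⟨by rw [Submodule.range_projection]; exact fun v hv => hp g v hv,
       by rw [Submodule.ker_projection]; exact fun v hv => hq g v hv⟩
  exact LinearMap.congr_fun hcomm.eq v

lemma IsCompFactor.exists_surjective (hss : ComplementedLattice (subrepLattice τ))
    (hcf : IsCompFactor σ τ) :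
    ∃ π : V →ₗ[F] U, Function.Surjective π ∧ IsIntertwiningMap τ σ π := by
  obtain ⟨p, q, -, hq, -, f, hf, -, hfτ⟩ := hcf
  obtain ⟨D, hD, hqD⟩ := CompleteSublattice.isComplemented_iff.mp hss q hq
  refine ⟨f ∘ₗ q.projectionOnto D hqD, hf.comp (q.projectionOnto_surjective hqD),
    ⟨fun g v => ?_⟩⟩
  have : q.projectionOnto D hqD (τ g v) = ⟨τ g _, hq g _ (q.projectionOnto D hqD v).2⟩ :=
    Subtype.ext (projection_apply_apply_of_isSubrep hq hD hqD g v)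
  simp only [LinearMap.comp_apply, this, hfτ]

lemma IsCompFactor.exists_injective (hss : ComplementedLattice (subrepLattice τ))
    (hcf : IsCompFactor σ τ) :
    ∃ ι : U →ₗ[F] V, Function.Injective ι ∧ IsIntertwiningMap σ τ ι := by
  obtain ⟨p, q, hp, hq, hpq, f, hf, hfker, hfτ⟩ := hcf
  obtain ⟨C, hC, hpC⟩ := CompleteSublattice.isComplemented_iff.mp hss p hp
  let f' : ↥(C ⊓ q) →ₗ[F] U := f ∘ₗ Submodule.inclusion inf_le_right
  have hinj : Function.Injective f' := by
    refine (injective_iff_map_eq_zero f').mpr fun x hx => Subtype.ext ?_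
    exact (Submodule.disjoint_def.mp hpC.disjoint) x ((hfker _).mp hx) x.2.1
  have hsurj : Function.Surjective f' := by
    intro u
    obtain ⟨y, rfl⟩ := hf u
    obtain ⟨a, ha, c, hc, hac⟩ :=
      Submodule.mem_sup.mp (hpC.sup_eq_top ▸ Submodule.mem_top (x := (y : V)))
    have hcq : c ∈ q := by
      rw [← add_sub_cancel_left a c, hac]
      exact q.sub_mem y.2 (hpq ha)
    refine ⟨⟨c, hc, hcq⟩, ?_⟩
    have hy : y = ⟨a, hpq ha⟩ + ⟨c, hcq⟩ := Subtype.ext hac.symm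
    rw [hy, map_add, (hfker _).mpr ha, zero_add]
    rfl
  let e := LinearEquiv.ofBijective f' ⟨hinj, hsurj⟩
  refine ⟨(C ⊓ q).subtype ∘ₗ e.symm.toLinearMap, Subtype.val_injective.comp e.symm.injective,
    ⟨fun g u => ?_⟩⟩
  obtain ⟨x, rfl⟩ := e.surjective u
  have : e ⟨τ g x, hC g x x.2.1, hq g x x.2.2⟩ = σ g (e x) := hfτ g (Submodule.inclusion _ x)
  simp [← this]

end CompositionFactor

lemma Subgroup.eq_top_of_le_of_mem_of_forall_mem_zpowers {G : Type} [Group G]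
    {S K : Subgroup G} [S.Normal] (hSK : S ≤ K) {c : G} (hcK : c ∈ K)
    (hc : ∀ x : G ⧸ S, x ∈ Subgroup.zpowers (c : G ⧸ S)) : K = ⊤ := by
  refine eq_top_iff.mpr fun g _ => ?_
  obtain ⟨k, hk⟩ := hc g
  have hkS : (c ^ k)⁻¹ * g ∈ S := QuotientGroup.eq.mp (by simpa using hk)
  simpa using K.mul_mem (K.zpow_mem hcK k) (hSK hkS)

section Character

variable {F G W : Type} [Field F] [Group G] [AddCommGroup W] [Module F W]
  (π : Representation F G W)

lemma units_smul_left_injective {w : W} (hw : w ≠ 0) :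
    Function.Injective fun a : Fˣ => a • w :=
  fun _ _ h => Units.ext (smul_left_injective F hw h)

def lineStabilizer (w : W) : Subgroup G where
  carrier := {g | ∃ a : Fˣ, π g w = a • w}
  one_mem' := ⟨1, by simp⟩
  mul_mem' := by
    rintro g h ⟨a, ha⟩ ⟨b, hb⟩
    refine ⟨a * b, ?_⟩
    rw [map_mul, Module.End.mul_apply, hb, LinearMap.map_smul_of_tower, ha, smul_smul, mul_comm]
  inv_mem' := by
    rintro g ⟨a, ha⟩
    refine ⟨a⁻¹, ?_⟩
    rw [eq_inv_smul_iff, ← LinearMap.map_smul_of_tower, ← ha, inv_self_apply]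

lemma exists_monoidHom_of_lineStabilizer_eq_top {w : W} (hw : w ≠ 0)
    (h : lineStabilizer π w = ⊤) : ∃ l : G →* Fˣ, ∀ g, π g w = l g • w := by
  choose a ha using fun g => (h ▸ Subgroup.mem_top g : g ∈ lineStabilizer π w)
  refine ⟨{ toFun := a, map_one' := ?_, map_mul' := fun g h => ?_ }, ha⟩
  · exact units_smul_left_injective hw (by simp [← ha])
  · refine units_smul_left_injective hw ?_
    show a (g * h) • w = (a g * a h) • w
    rw [← ha, map_mul, Module.End.mul_apply, ha h, LinearMap.map_smul_of_tower, ha g, smul_smul,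
      mul_comm]

theorem exists_eigencharacter_of_invariants_ne_bot [IsAlgClosed F] [FiniteDimensional F W]
    (S : Subgroup G) [S.Normal] (hcyc : IsCyclic (G ⧸ S))
    (h : invariants (π.comp S.subtype) ≠ ⊥) :
    ∃ (l : G →* Fˣ) (w : W), w ≠ 0 ∧ S ≤ l.ker ∧ ∀ g, π g w = l g • w := by
  obtain ⟨x, hx⟩ := hcyc.exists_generator
  obtain ⟨c, rfl⟩ := QuotientGroup.mk_surjective x
  have : Nontrivial (invariants (π.comp S.subtype)) := Submodule.nontrivial_iff_ne_bot.mpr h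
  obtain ⟨μ, hμ⟩ := Module.End.exists_eigenvalue
    ((π c).restrict fun _ hw => mem_invariants_comp_subtype_apply π S hw c)
  obtain ⟨⟨w, hwS⟩, hw⟩ := hμ.exists_hasEigenvector
  have hw0 : w ≠ 0 := fun h0 => hw.2 (Subtype.ext h0)
  have hcw : π c w = μ • w := congrArg Subtype.val hw.apply_eq_smul
  have hμ : μ ≠ 0 := by
    rintro rfl
    exact hw0 ((π.apply_bijective c).1 (by rw [hcw, zero_smul, map_zero]))
  have hS : ∀ s ∈ S, π s w = w := fun s hs => hwS ⟨s, hs⟩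
  obtain ⟨l, hl⟩ := exists_monoidHom_of_lineStabilizer_eq_top π hw0 <|
    Subgroup.eq_top_of_le_of_mem_of_forall_mem_zpowers (fun s hs => ⟨1, by simp [hS s hs]⟩)
      ⟨Units.mk0 μ hμ, hcw⟩ hx
  exact ⟨l, w, hw0, fun s hs => units_smul_left_injective hw0 (by simp [← hl, hS s hs]), hl⟩

end Character

section Twist

variable {F G V₁ V₂ : Type} [Field F] [Group G] [AddCommGroup V₁] [Module F V₁]
  [AddCommGroup V₂] [Module F V₂]

def Representation.twist (ρ : Representation F G V₁) (l : G →* Fˣ) : Representation F G V₁ where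
  toFun g := (l g : F) • ρ g
  map_one' := by simp
  map_mul' g h := by simp only [map_mul, Units.val_mul, smul_mul_smul_comm]

@[simp]
lemma Representation.twist_apply (ρ : Representation F G V₁) (l : G →* Fˣ) (g : G) (v : V₁) :
    ρ.twist l g v = (l g : F) • ρ g v :=
  rfl

lemma isSubrep_twist_iff {ρ : Representation F G V₁} {l : G →* Fˣ} {p : Submodule F V₁} :
    IsSubrep (ρ.twist l) p ↔ IsSubrep ρ p :=
  forall₃_congr fun g _ _ => p.smul_mem_iff (l g).ne_zero

lemma IsIrredRep.twist {ρ : Representation F G V₁} (h : IsIrredRep ρ) (l : G →* Fˣ) :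
    IsIrredRep (ρ.twist l) :=
  ⟨h.1, fun p hp => h.2 p (isSubrep_twist_iff.mp hp)⟩

theorem Representation.IsIntertwiningMap.bijective_of_isIrredRep {ρ₁ : Representation F G V₁}
    {ρ₂ : Representation F G V₂} {ψ : V₁ →ₗ[F] V₂} (hψ : IsIntertwiningMap ρ₁ ρ₂ ψ)
    (h₁ : IsIrredRep ρ₁) (h₂ : IsIrredRep ρ₂) (hψ0 : ψ ≠ 0) : Function.Bijective ψ := by
  have hker : IsSubrep ρ₁ (LinearMap.ker ψ) := fun g v hv => by
    simp_all [LinearMap.mem_ker, hψ.isIntertwining]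
  have hrange : IsSubrep ρ₂ (LinearMap.range ψ) := by
    rintro g _ ⟨v, rfl⟩
    exact ⟨ρ₁ g v, hψ.isIntertwining g v⟩
  refine ⟨LinearMap.ker_eq_bot.mp ((h₁.2 _ hker).resolve_right ?_),
    LinearMap.range_eq_top.mp ((h₂.2 _ hrange).resolve_left ?_)⟩
  · exact fun h => hψ0 (LinearMap.ker_eq_top.mp h)
  · exact fun h => hψ0 (LinearMap.range_eq_bot.mp h)

end Twist

lemma eq_one_of_pow_ordProj_ringChar_eq_one {F : Type} [Field F] {x : F} {n : ℕ}
    (h : x ^ ordProj[ringChar F] n = 1) : x = 1 := by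
  rcases CharP.char_is_prime_or_zero F (ringChar F) with hp | hp
  · have : ExpChar F (ringChar F) := ExpChar.prime hp
    simpa using (ExpChar.pow_prime_pow_mul_eq_one_iff _ _ 1 x).mp (by simpa using h)
  · -- `ordProj[0] n = 0 ^ 0 = 1`
    simpa [hp] using h

theorem statement_16_general
    {F : Type} [Field F] [IsAlgClosed F]
    {G : Type} [Group G]
    (S : Subgroup G) [S.Normal] (hcyc : IsCyclic (G ⧸ S))
    -- `A` is the subgroup with `S ≤ A ≤ G` and `[A : S]` equal to the `ℓ`-part of `[G : S]`
    (A : Subgroup G)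
    (hA : S.relIndex A = ringChar F ^ ((Nat.factorization S.index) (ringChar F)))
    {V₁ : Type} [AddCommGroup V₁] [Module F V₁] [FiniteDimensional F V₁]
    {V₂ : Type} [AddCommGroup V₂] [Module F V₂] [FiniteDimensional F V₂]
    (ρ₁ : Representation F G V₁) (ρ₂ : Representation F G V₂)
    (h₁ : IsIrredRep ρ₁) (h₂ : IsIrredRep ρ₂)
    -- `U` is a simple `F[S]`-module occurring as a composition factor of both restrictions
    {U : Type} [AddCommGroup U] [Module F U]
    (σ : Representation F (↥S) U) (hU : IsIrredRep σ)
    (hcf₁ : IsCompFactor σ (ρ₁.comp S.subtype))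
    (hcf₂ : IsCompFactor σ (ρ₂.comp S.subtype)) :
    ∃ l : G →* Fˣ, A ≤ l.ker ∧
      ∃ e : V₁ ≃ₗ[F] V₂, ∀ (g : G) (v : V₁), e ((l g : F) • ρ₁ g v) = ρ₂ g (e v) := by
  obtain ⟨π₁, hπ₁, hπ₁S⟩ :=
    hcf₁.exists_surjective (complementedLattice_subrepLattice_comp_subtype ρ₁ S h₁)
  obtain ⟨ι₂, hι₂, hι₂S⟩ :=
    hcf₂.exists_injective (complementedLattice_subrepLattice_comp_subtype ρ₂ S h₂)
  have : Nontrivial U := (Submodule.nontrivial_iff F).mp (nontrivial_of_ne _ _ hU.1)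
  have hne : invariants ((linHom ρ₁ ρ₂).comp S.subtype) ≠ ⊥ := by
    obtain ⟨u, hu⟩ := exists_ne (0 : U)
    obtain ⟨v, rfl⟩ := hπ₁ u
    refine (Submodule.ne_bot_iff _).mpr ⟨ι₂ ∘ₗ π₁, ?_, fun h => hu (hι₂ ?_)⟩
    · rw [mem_invariants]
      exact (mem_linHom_invariants_iff_isIntertwining (ρ := ρ₁.comp S.subtype)
        (σ := ρ₂.comp S.subtype) _).mpr
        ⟨fun s v => (congrArg ι₂ (hπ₁S.isIntertwining s v)).trans (hι₂S.isIntertwining s _)⟩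
    · simpa using LinearMap.congr_fun h v
  obtain ⟨l, ψ, hψ0, hSl, hψ⟩ := exists_eigencharacter_of_invariants_ne_bot _ S hcyc hne
  have hint : IsIntertwiningMap (ρ₁.twist l) ρ₂ ψ := ⟨fun g v => by
    simpa [Units.smul_def] using (LinearMap.congr_fun (hψ g) (ρ₁ g v)).symm⟩
  refine ⟨l, fun a ha => ?_, .ofBijective ψ (hint.bijective_of_isIrredRep (h₁.twist l) h₂ hψ0),
    hint.isIntertwining⟩
  have hpow : (l a : F) ^ S.relIndex A = 1 := by
    rw [← Units.val_pow_eq_pow_val, ← map_pow, hSl (S.pow_relIndex_mem ha), Units.val_one]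
  exact Units.ext (eq_one_of_pow_ordProj_ringChar_eq_one (hA ▸ hpow))

theorem statement_16
    {F : Type} [Field F] [IsAlgClosed F]
    {G : Type} [Group G] [Finite G]
    (S : Subgroup G) [S.Normal] (hcyc : IsCyclic (G ⧸ S))
    -- `A` is the subgroup with `S ≤ A ≤ G` and `[A : S]` equal to the `ℓ`-part of `[G : S]`
    (A : Subgroup G) (hSA : S ≤ A)
    (hA : S.relIndex A = ringChar F ^ ((Nat.factorization S.index) (ringChar F)))
    {V₁ : Type} [AddCommGroup V₁] [Module F V₁] [FiniteDimensional F V₁]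
    {V₂ : Type} [AddCommGroup V₂] [Module F V₂] [FiniteDimensional F V₂]
    (ρ₁ : Representation F G V₁) (ρ₂ : Representation F G V₂)
    (h₁ : IsIrredRep ρ₁) (h₂ : IsIrredRep ρ₂)
    -- `U` is a simple `F[S]`-module occurring as a composition factor of both restrictions
    {U : Type} [AddCommGroup U] [Module F U] [FiniteDimensional F U]
    (σ : Representation F (↥S) U) (hU : IsIrredRep σ)
    (hcf₁ : IsCompFactor σ (ρ₁.comp S.subtype))
    (hcf₂ : IsCompFactor σ (ρ₂.comp S.subtype)) :
    ∃ l : G →* Fˣ, A ≤ l.ker ∧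
      ∃ e : V₁ ≃ₗ[F] V₂, ∀ (g : G) (v : V₁), e ((l g : F) • ρ₁ g v) = ρ₂ g (e v) :=
  statement_16_general S hcyc A hA ρ₁ ρ₂ h₁ h₂ σ hU hcf₁ hcf₂
end
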